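/- Let α₁, α₂, …, α_k (k ≥ 4) be a cyclic sequence of k angles, each from the set {0°, 90°, 180°, 270°, 360°}, whose sum equals k·180° − 360°. Then either the sequence is exactly (90°, 90°, 90°, 90°) with k = 4, or there exist two cyclically adjacent entries (γ, δ) with γ ∈ {180°, 270°, 360°} and δ ∈ {0°, 90°}, or with δ ∈ {180°, 270°, 360°} and γ ∈ {0°, 90°}. -/

import Mathlib

/-!
Call an angle small if it is `0` or `90` and large otherwise. If no two cyclically adjacent
angles are of different sizes, all angles have the size of the first one. All large is
impossible, since then the sum is at least `k·180`. All small forces `k·180 − 360 ≤ k·90`,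
i.e. `k ≤ 4`, so `k = 4` and the sum `360` of four angles `≤ 90` is attained only by `90`s.
-/

open Finset

theorem ZMod.iff_zero_of_iff_add_one {k : ℕ} [NeZero k] {p : ZMod k → Prop}
    (hstep : ∀ i, p (i + 1) ↔ p i) (i : ZMod k) : p i ↔ p 0 := by
  obtain ⟨n, rfl⟩ := ZMod.natCast_zmod_surjective i
  induction n with
  | zero => simp
  | succ n ih => rw [Nat.cast_succ, hstep, ih]

theorem le_ninety_iff_of_not_mixed {a b : ℕ}
    (ha : a ∈ ({0, 90, 180, 270, 360} : Set ℕ)) (hb : b ∈ ({0, 90, 180, 270, 360} : Set ℕ))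
    (hab : a ∈ ({180, 270, 360} : Set ℕ) → b ∉ ({0, 90} : Set ℕ))
    (hba : a ∈ ({0, 90} : Set ℕ) → b ∉ ({180, 270, 360} : Set ℕ)) :
    b ≤ 90 ↔ a ≤ 90 := by
  simp only [Set.mem_insert_iff, Set.mem_singleton_iff] at ha hb hab hba
  omega

theorem eq_four_and_forall_eq_ninety {k : ℕ} [NeZero k] (hk : 4 ≤ k) {f : ZMod k → ℕ}
    (hsmall : ∀ i, f i ≤ 90) (hsum : ∑ i, f i = k * 180 - 360) :
    k = 4 ∧ ∀ i, f i = 90 := by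
  have hcard : #(univ : Finset (ZMod k)) = k := by simp [ZMod.card k]
  have hle : ∑ i, f i ≤ ∑ _i : ZMod k, 90 := sum_le_sum fun i _ => hsmall i
  rw [sum_const, hcard, smul_eq_mul] at hle
  have hk4 : k = 4 := by omega
  refine ⟨hk4, fun i => ?_⟩
  have hconst : ∑ i, f i = ∑ _i : ZMod k, 90 := by
    rw [hsum, sum_const, hcard, smul_eq_mul, hk4]
  exact (sum_eq_sum_iff_of_le fun i _ => hsmall i).1 hconst i (mem_univ i)

theorem sum_ne_of_forall_le {k : ℕ} [NeZero k] {f : ZMod k → ℕ} (hlarge : ∀ i, 180 ≤ f i) :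
    ∑ i, f i ≠ k * 180 - 360 := by
  have hge : ∑ _i : ZMod k, 180 ≤ ∑ i, f i := sum_le_sum fun i _ => hlarge i
  rw [sum_const, card_univ, ZMod.card k, smul_eq_mul] at hge
  have := NeZero.pos k
  omega

/-- A cyclic sequence of `k ≥ 4` angles from `{0,90,180,270,360}`
summing to `k·180 − 360` is either constantly `90` (with `k = 4`) or contains a
cyclically adjacent pair with one entry in `{180,270,360}` and the other in `{0,90}`. -/
theorem stmt_0 (k : ℕ) [NeZero k] (hk : 4 ≤ k) (f : ZMod k → ℕ)
    (hmem : ∀ i, f i ∈ ({0, 90, 180, 270, 360} : Set ℕ))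
    (hsum : ∑ i, f i = k * 180 - 360) :
    (k = 4 ∧ ∀ i, f i = 90) ∨
      ∃ i : ZMod k,
        (f i ∈ ({180, 270, 360} : Set ℕ) ∧ f (i + 1) ∈ ({0, 90} : Set ℕ)) ∨
        (f i ∈ ({0, 90} : Set ℕ) ∧ f (i + 1) ∈ ({180, 270, 360} : Set ℕ)) := by
  rw [or_iff_not_imp_right]
  intro hmixed
  push Not at hmixed
  have hsize (i : ZMod k) : f i ≤ 90 ↔ f 0 ≤ 90 :=
    ZMod.iff_zero_of_iff_add_one (p := fun i => f i ≤ 90)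
      (fun i => le_ninety_iff_of_not_mixed (hmem i) (hmem (i + 1))
        (hmixed i).1 (hmixed i).2) i
  rcases le_or_gt (f 0) 90 with h0 | h0
  · exact eq_four_and_forall_eq_ninety hk (fun i => (hsize i).2 h0) hsum
  · refine absurd hsum (sum_ne_of_forall_le fun i => ?_)
    have hi := hmem i
    simp only [Set.mem_insert_iff, Set.mem_singleton_iff] at hi
    have := (hsize i).not.2 h0.not_ge
    omega
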